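/- Suppose P ⊆ Q ⊆ M are subsets of a metric structure M, with P, Q separable, a ∈ M commutes with every element of P, p = tp(a/P), and q ∈ S(Q) is an heir of p. Then every realization of q commutes with every element of Q; i.e., q(M) ⊆ Q′ ∩ M. -/

import Mathlib

noncomputable section

/-- An abstract tracial state on a complex normed star algebra: the data of a
tracial von Neumann algebra `(M, τ)`. -/
structure TraceData (M : Type*) [NormedRing M] [StarRing M] [Algebra ℂ M] where
  τ : M → ℂ
  map_add : ∀ x y, τ (x + y) = τ x + τ y
  map_smul : ∀ (c : ℂ) (x : M), τ (c • x) = c * τ x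
  map_one : τ 1 = 1
  map_star : ∀ x, τ (star x) = starRingEnd ℂ (τ x)
  tracial : ∀ x y, τ (x * y) = τ (y * x)
  re_nonneg : ∀ x, 0 ≤ (τ (star x * x)).re
  im_eq_zero : ∀ x, (τ (star x * x)).im = 0
  faithful : ∀ x, τ (star x * x) = 0 → x = 0
  bounded : ∀ x, ‖τ x‖ ≤ ‖x‖

namespace TraceData

variable {M : Type*} [NormedRing M] [StarRing M] [Algebra ℂ M]

/-- The Hilbert–Schmidt (2-)norm associated to a trace. -/
def norm2 (T : TraceData M) (x : M) : ℝ := Real.sqrt (T.τ (star x * x)).re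

end TraceData

/-- `*`-polynomials in `n` noncommuting variables (the second copy of `Fin n`
stands for the formal adjoints of the variables). -/
abbrev StarPoly (n : ℕ) := FreeAlgebra ℂ (Fin n ⊕ Fin n)

/-- Evaluation of a `*`-polynomial at a tuple of elements. -/
def StarPoly.evalAt {M : Type*} [Ring M] [Algebra ℂ M] [StarRing M] {n : ℕ}
    (p : StarPoly n) (v : Fin n → M) : M :=
  (FreeAlgebra.lift ℂ (Sum.elim v fun i => star (v i))) p

/-- Formulas of the continuous first-order language of tracial von Neumann
algebras: atomic formulas are real and imaginary parts of traces of
`*`-polynomials; formulas are closed under continuous combinations and the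
quantifiers `sup` and `inf` (binding the last variable, ranging over the
operator-norm unit ball). -/
inductive Formula : ℕ → Type
  | re {n : ℕ} (p : StarPoly n) : Formula n
  | im {n : ℕ} (p : StarPoly n) : Formula n
  | comb {n k : ℕ} (f : (Fin k → ℝ) → ℝ) (hf : Continuous f) (φ : Fin k → Formula n) :
      Formula n
  | sup {n : ℕ} (φ : Formula (n + 1)) : Formula n
  | inf {n : ℕ} (φ : Formula (n + 1)) : Formula n

/-- Evaluation of a formula in a tracial von Neumann algebra, with quantifiers
relativized to the elements of a subset `S` of operator norm at most 1. -/
def Formula.evalIn {M : Type*} [NormedRing M] [StarRing M] [Algebra ℂ M]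
    (T : TraceData M) (S : Set M) : {n : ℕ} → Formula n → (Fin n → M) → ℝ
  | _, .re p, v => (T.τ (p.evalAt v)).re
  | _, .im p, v => (T.τ (p.evalAt v)).im
  | _, .comb f _ φ, v => f fun i => (φ i).evalIn T S v
  | _, .sup φ, v => ⨆ x : {y : M // y ∈ S ∧ ‖y‖ ≤ 1}, φ.evalIn T S (Fin.snoc v x.1)
  | _, .inf φ, v => ⨅ x : {y : M // y ∈ S ∧ ‖y‖ ≤ 1}, φ.evalIn T S (Fin.snoc v x.1)

/-- Evaluation of a formula in a tracial von Neumann algebra (quantifiers range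
over the operator-norm unit ball). -/
def Formula.eval {M : Type*} [NormedRing M] [StarRing M] [Algebra ℂ M]
    (T : TraceData M) {n : ℕ} (φ : Formula n) (v : Fin n → M) : ℝ :=
  φ.evalIn T Set.univ v

/-- Quantifier-free formulas. -/
def Formula.IsQF : {n : ℕ} → Formula n → Prop
  | _, .re _ => True
  | _, .im _ => True
  | _, .comb _ _ φ => ∀ i, (φ i).IsQF
  | _, .sup _ => False
  | _, .inf _ => False

/-- Formulas of the form `sup_y ... sup_y' ψ` with `ψ` quantifier-free. -/
def Formula.IsSupQF : {n : ℕ} → Formula n → Prop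
  | _, .sup φ => φ.IsSupQF
  | _, φ => φ.IsQF

/-- Existential formulas: `inf_x ... inf_x' ψ` with `ψ` quantifier-free. -/
def Formula.IsExistential : {n : ℕ} → Formula n → Prop
  | _, .inf φ => φ.IsExistential
  | _, φ => φ.IsQF

/-- `∃₂`-formulas: `inf_x ... sup_y ... ψ` with `ψ` quantifier-free. -/
def Formula.IsInfSupQF : {n : ℕ} → Formula n → Prop
  | _, .inf φ => φ.IsInfSupQF
  | _, φ => φ.IsSupQF

/-- Bounded sequences in a normed algebra, i.e. elements of `ℓ^∞(M)`. -/
def BddSeq (M : Type*) [NormedRing M] : Type _ :=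
  {x : ℕ → M // ∃ C : ℝ, ∀ k, ‖x k‖ ≤ C}

namespace BddSeq

variable {M : Type*} [NormedRing M] [StarRing M] [NormedStarGroup M]

instance : Add (BddSeq M) :=
  ⟨fun x y => ⟨fun k => x.1 k + y.1 k, by
    obtain ⟨C, hC⟩ := x.2; obtain ⟨D, hD⟩ := y.2
    exact ⟨C + D, fun k => (norm_add_le _ _).trans (add_le_add (hC k) (hD k))⟩⟩⟩

instance : Neg (BddSeq M) :=
  ⟨fun x => ⟨fun k => -(x.1 k), by
    obtain ⟨C, hC⟩ := x.2
    exact ⟨C, fun k => by rw [norm_neg]; exact hC k⟩⟩⟩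

instance : Sub (BddSeq M) := ⟨fun x y => x + -y⟩

instance : Mul (BddSeq M) :=
  ⟨fun x y => ⟨fun k => x.1 k * y.1 k, by
    obtain ⟨C, hC⟩ := x.2; obtain ⟨D, hD⟩ := y.2
    refine ⟨max C 0 * max D 0, fun k => (norm_mul_le _ _).trans ?_⟩
    exact mul_le_mul ((hC k).trans (le_max_left _ _)) ((hD k).trans (le_max_left _ _))
      (norm_nonneg _) (le_max_right _ _)⟩⟩

instance : One (BddSeq M) := ⟨⟨fun _ => 1, ⟨‖(1 : M)‖, fun _ => le_rfl⟩⟩⟩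

instance : Star (BddSeq M) :=
  ⟨fun x => ⟨fun k => star (x.1 k), by
    obtain ⟨C, hC⟩ := x.2
    exact ⟨C, fun k => by rw [norm_star]; exact hC k⟩⟩⟩

end BddSeq

/-- The constant sequence. -/
def constSeq {M : Type*} [NormedRing M] (x : M) : BddSeq M :=
  ⟨fun _ => x, ‖x‖, fun _ => le_rfl⟩

/-- `π : ℓ^∞(M) → Q` exhibits `(Q, T_Q)` as the tracial ultrapower `M^𝒰` of
`(M, T_M)` with respect to the ultrafilter `𝒰`. -/
structure IsTracialUltrapower (𝒰 : Ultrafilter ℕ) {M Q : Type*}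
    [NormedRing M] [StarRing M] [Algebra ℂ M] [NormedStarGroup M]
    [NormedRing Q] [StarRing Q] [Algebra ℂ Q]
    (TM : TraceData M) (TQ : TraceData Q) (π : BddSeq M → Q) : Prop where
  surjective : Function.Surjective π
  map_one : π 1 = 1
  map_add : ∀ x y, π (x + y) = π x + π y
  map_mul : ∀ x y, π (x * y) = π x * π y
  map_star : ∀ x, π (star x) = star (π x)
  map_algebraMap : ∀ c : ℂ, π (constSeq (algebraMap ℂ M c)) = algebraMap ℂ Q c
  eq_iff : ∀ x y, π x = π y ↔
      Filter.Tendsto (fun k => TM.norm2 (x.1 k - y.1 k)) (𝒰 : Filter ℕ) (nhds 0)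
  trace : ∀ x, Filter.Tendsto (fun k => TM.τ (x.1 k)) (𝒰 : Filter ℕ) (nhds (TQ.τ (π x)))
  norm_le : ∀ (x : BddSeq M) (r : ℝ),
      Filter.Tendsto (fun k => ‖x.1 k‖) (𝒰 : Filter ℕ) (nhds r) → ‖π x‖ ≤ r
  los : ∀ (n : ℕ) (φ : Formula n) (x : Fin n → BddSeq M),
      Filter.Tendsto (fun k => φ.eval TM fun i => (x i).1 k) (𝒰 : Filter ℕ)
        (nhds (φ.eval TQ fun i => π (x i)))

/-- A (trace-preserving, isometric) embedding of tracial von Neumann algebras. -/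
structure TraceEmbedding {N M : Type*} [NormedRing N] [StarRing N] [Algebra ℂ N]
    [NormedRing M] [StarRing M] [Algebra ℂ M]
    (TN : TraceData N) (TM : TraceData M) where
  toHom : N →⋆ₐ[ℂ] M
  isometric : ∀ x, ‖toHom x‖ = ‖x‖
  trace_eq : ∀ x, TM.τ (toHom x) = TN.τ x

/-- A (trace-preserving, isometric) automorphism of a tracial von Neumann
algebra. -/
structure TraceAut {M : Type*} [NormedRing M] [StarRing M] [Algebra ℂ M]
    (T : TraceData M) where
  toEquiv : M ≃⋆ₐ[ℂ] M
  isometric : ∀ x, ‖toEquiv x‖ = ‖x‖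
  trace_eq : ∀ x, T.τ (toEquiv x) = T.τ x

section Defs

variable {N M : Type*} [NormedRing N] [StarRing N] [Algebra ℂ N]
  [NormedRing M] [StarRing M] [Algebra ℂ M]

/-- An embedding is elementary if it preserves the values of all formulas. -/
def TraceEmbedding.Elementary {TN : TraceData N} {TM : TraceData M}
    (f : TraceEmbedding TN TM) : Prop :=
  ∀ (n : ℕ) (φ : Formula n) (v : Fin n → N),
    φ.eval TM (fun i => f.toHom (v i)) = φ.eval TN v

/-- An embedding is existential if it preserves the values of all existential
formulas. -/
def TraceEmbedding.Existential {TN : TraceData N} {TM : TraceData M}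
    (f : TraceEmbedding TN TM) : Prop :=
  ∀ (n : ℕ) (φ : Formula n), φ.IsExistential → ∀ v : Fin n → N,
    φ.eval TM (fun i => f.toHom (v i)) = φ.eval TN v

/-- An embedding is downward `∃₂` if every nonnegative `∃₂`-formula with
parameters in the domain whose value is `0` in the codomain has value `0`
in the domain. -/
def TraceEmbedding.DownwardE2 {TN : TraceData N} {TM : TraceData M}
    (f : TraceEmbedding TN TM) : Prop :=
  ∀ (n : ℕ) (φ : Formula n), φ.IsInfSupQF →
    (∀ v : Fin n → N, 0 ≤ φ.eval TN v) → (∀ v : Fin n → M, 0 ≤ φ.eval TM v) →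
    ∀ a : Fin n → N, φ.eval TM (fun i => f.toHom (a i)) = 0 → φ.eval TN a = 0

/-- The center of `M` is trivial. -/
def IsFactorAlg (M : Type*) [NormedRing M] [StarRing M] [Algebra ℂ M] : Prop :=
  ∀ x : M, (∀ y : M, x * y = y * x) → ∃ c : ℂ, x = algebraMap ℂ M c

/-- The relative commutant of a subset. -/
def RelComm {M : Type*} [Mul M] (S : Set M) : Set M :=
  {x : M | ∀ s ∈ S, x * s = s * x}

/-- A subset (e.g. a relative commutant) is a factor: its relative center is
trivial. -/
def IsFactorSet {M : Type*} [NormedRing M] [StarRing M] [Algebra ℂ M] (S : Set M) : Prop :=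
  ∀ x ∈ S, (∀ y ∈ S, x * y = y * x) → ∃ c : ℂ, x = algebraMap ℂ M c

/-- `(M, τ)` is separable with respect to the 2-norm. -/
def Separable2 {M : Type*} [NormedRing M] [StarRing M] [Algebra ℂ M]
    (T : TraceData M) : Prop :=
  ∃ S : Set M, S.Countable ∧ ∀ x : M, ∀ ε : ℝ, 0 < ε → ∃ y ∈ S, T.norm2 (x - y) < ε

/-- A subset of `(M, τ)` is separable with respect to the 2-norm. -/
def SeparableIn {M : Type*} [NormedRing M] [StarRing M] [Algebra ℂ M]
    (T : TraceData M) (A : Set M) : Prop :=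
  ∃ S : Set M, S ⊆ A ∧ S.Countable ∧
    ∀ x ∈ A, ∀ ε : ℝ, 0 < ε → ∃ y ∈ S, T.norm2 (x - y) < ε

/-- Separable (countable) saturation: every countable collection of conditions
with parameters which is approximately finitely satisfiable in the unit ball is
satisfiable. -/
def SeparablySaturated {M : Type*} [NormedRing M] [StarRing M] [Algebra ℂ M]
    (T : TraceData M) : Prop :=
  ∀ (nn : ℕ → ℕ) (φ : ∀ i : ℕ, Formula (nn i + 1)) (p : ∀ i : ℕ, Fin (nn i) → M),
    (∀ (F : Finset ℕ) (ε : ℝ), 0 < ε →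
      ∃ a : M, ‖a‖ ≤ 1 ∧ ∀ i ∈ F, (φ i).eval T (Fin.snoc (p i) a) ≤ ε) →
    ∃ a : M, ‖a‖ ≤ 1 ∧ ∀ i : ℕ, (φ i).eval T (Fin.snoc (p i) a) ≤ 0

/-- Two countable tuples have the same type (over `∅`). -/
def SameType {M : Type*} [NormedRing M] [StarRing M] [Algebra ℂ M]
    (T : TraceData M) (a b : ℕ → M) : Prop :=
  ∀ (n : ℕ) (φ : Formula n) (s : Fin n → ℕ), φ.eval T (a ∘ s) = φ.eval T (b ∘ s)

/-- Countable homogeneity: any two countable tuples from the unit ball with the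
same type are conjugate by an automorphism. -/
def CountablyHomogeneous {M : Type*} [NormedRing M] [StarRing M] [Algebra ℂ M]
    (T : TraceData M) : Prop :=
  ∀ a b : ℕ → M, (∀ j, ‖a j‖ ≤ 1) → (∀ j, ‖b j‖ ≤ 1) → SameType T a b →
    ∃ α : TraceAut T, ∀ j, α.toEquiv (a j) = b j

end Defs

/-- The `*`-polynomial `star [y, x] * [y, x]` in two variables (`x` the first,
`y` the last). -/
def commPoly : StarPoly 2 :=
  (FreeAlgebra.ι ℂ (Sum.inr 0 : Fin 2 ⊕ Fin 2) * FreeAlgebra.ι ℂ (Sum.inr 1)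
    - FreeAlgebra.ι ℂ (Sum.inr 1) * FreeAlgebra.ι ℂ (Sum.inr 0)) *
  (FreeAlgebra.ι ℂ (Sum.inl 1 : Fin 2 ⊕ Fin 2) * FreeAlgebra.ι ℂ (Sum.inl 0)
    - FreeAlgebra.ι ℂ (Sum.inl 0) * FreeAlgebra.ι ℂ (Sum.inl 1))

lemma commPoly_evalAt {M : Type*} [Ring M] [Algebra ℂ M] [StarRing M]
    (v : Fin 2 → M) :
    commPoly.evalAt v = star (v 1 * v 0 - v 0 * v 1) * (v 1 * v 0 - v 0 * v 1) := by
  simp [commPoly, StarPoly.evalAt, map_mul, map_sub, star_sub, star_mul]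

lemma trace_zero {M : Type*} [NormedRing M] [StarRing M] [Algebra ℂ M]
    (T : TraceData M) : T.τ 0 = 0 := by
  have := T.map_smul 0 0
  simpa using this

/-- Realizations of heirs land in the relative commutant: suppose `P ⊆ Q` are
separable subsets of (an ultrapower of) a tracial von Neumann algebra `M`,
`a ∈ M` commutes with every element of `P`, and `b` realizes an heir over `Q`
of the type `tp(a/P)`. Then `b` commutes with every element of `Q`. -/
theorem stmt_17 {M : Type*} [NormedRing M] [StarRing M] [Algebra ℂ M]
    (TM : TraceData M) (P Q : Set M) (hPQ : P ⊆ Q)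
    (hPsep : SeparableIn TM P) (hQsep : SeparableIn TM Q)
    (a b : M)
    (hcomm : ∀ x ∈ P, a * x = x * a)
    (hext : ∀ (n : ℕ) (φ : Formula (n + 1)) (w : Fin n → M), (∀ i, w i ∈ P) →
      φ.eval TM (Fin.snoc w b) = φ.eval TM (Fin.snoc w a))
    (hheir : ∀ (n : ℕ) (φ : Formula (n + 1)) (w : Fin n → M), (∀ i, w i ∈ Q) →
      ∀ ε : ℝ, 0 < ε → ∃ c : Fin n → M, (∀ i, c i ∈ P) ∧
        |φ.eval TM (Fin.snoc w b) - φ.eval TM (Fin.snoc c a)| < ε) :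
    ∀ x ∈ Q, b * x = x * b := by
  intro x hx
  set z : M := b * x - x * b with hz
  have key : ∀ ε : ℝ, 0 < ε → (TM.τ (star z * z)).re < ε := by
    intro ε hε
    obtain ⟨c, hcP, habs⟩ := hheir 1 (Formula.re commPoly) ![x]
      (fun i => by fin_cases i <;> exact hx) ε hε
    have hvb : (Formula.re commPoly).eval TM (Fin.snoc ![x] b)
        = (TM.τ (star z * z)).re := by
      have h0 : (Fin.snoc ![x] b : Fin 2 → M) 0 = x := rfl
      have h1 : (Fin.snoc ![x] b : Fin 2 → M) 1 = b := rfl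
      simp only [Formula.eval, Formula.evalIn, commPoly_evalAt, h0, h1, hz]
    have hva : (Formula.re commPoly).eval TM (Fin.snoc c a) = 0 := by
      have h0 : (Fin.snoc c a : Fin 2 → M) 0 = c 0 := rfl
      have h1 : (Fin.snoc c a : Fin 2 → M) 1 = a := rfl
      have hac : a * c 0 - c 0 * a = 0 := sub_eq_zero.mpr (hcomm _ (hcP 0))
      simp only [Formula.eval, Formula.evalIn, commPoly_evalAt, h0, h1, hac,
        mul_zero, trace_zero, Complex.zero_re]
    rw [hvb, hva, sub_zero] at habs
    exact lt_of_le_of_lt (le_abs_self _) habs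
  have hre' : (TM.τ (star z * z)).re ≤ 0 := by
    by_contra h
    push_neg at h
    exact absurd (key _ h) (lt_irrefl _)
  have hτ : TM.τ (star z * z) = 0 :=
    Complex.ext (le_antisymm hre' (TM.re_nonneg z)) (TM.im_eq_zero z)
  have hz0 : z = 0 := TM.faithful z hτ
  exact sub_eq_zero.mp hz0
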